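/- arXiv:1309.6550 — 4 statements merged into one kernel-verified Lean document; each statement's English description precedes it below -/
import Mathlib

section
/- (Holant theorem) Let G = (V,F,E) be a factor graph with finite alphabets X (for variables) and Y (for edge labels). Suppose for each a ∈ F, f_a(x_{∂a}) = Σ_{y_{∂a} ∈ Y^{d_a}} f̂_a(y_{∂a}) ∏_{i∈∂a} φ_{i,a}(x_i, y_i). Define ĥ_i(y_{i,∂i}) = Σ_{x∈X} h_i(x) ∏_{a∈∂i} φ_{i,a}(x, y_{i,a}). Then Z(G) = Σ_{x∈X^N} ∏_{a∈F} f_a(x_{∂a}) ∏_{i∈V} h_i(x_i) equals Σ_{y∈Y^{|E|}} ∏_{a∈F} f̂_a(y_{∂a,a}) ∏_{i∈V} ĥ_i(y_{i,∂i}). -/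
open Finset

/-- **Holant theorem.** If every factor `f_a` admits the expansion
`f_a(x_{∂a}) = ∑_{y_{∂a}} f̂_a(y_{∂a}) ∏_{i ∈ ∂a} φ_{i,a}(x_i, y_i)`, then the partition
function can be computed in the transformed domain:
`Z(G) = ∑_{y : E → Y} ∏_a f̂_a(y_{∂a,a}) ∏_i ĥ_i(y_{i,∂i})`, where
`ĥ_i(y_{i,∂i}) = ∑_x h_i(x) ∏_{a ∈ ∂i} φ_{i,a}(x, y_{i,a})`. -/
theorem holant_theorem
    {V F X Y : Type*} [Fintype V] [Fintype F] [Fintype X] [Fintype Y]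
    [DecidableEq V] [DecidableEq F]
    (N : F → Finset V)
    (f : (a : F) → ({i // i ∈ N a} → X) → ℝ)
    (fhat : (a : F) → ({i // i ∈ N a} → Y) → ℝ)
    (φ : V → F → X → Y → ℝ)
    (h : V → X → ℝ)
    (hf : ∀ (a : F) (xa : {i // i ∈ N a} → X),
      f a xa = ∑ ya : {i // i ∈ N a} → Y,
        fhat a ya * ∏ i : {i // i ∈ N a}, φ i.1 a (xa i) (ya i)) :
    ∑ x : V → X, (∏ a : F, f a (fun i => x i.1)) * ∏ i : V, h i (x i)
      = ∑ y : {e : V × F // e.1 ∈ N e.2} → Y,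
          (∏ a : F, fhat a (fun i => y ⟨(i.1, a), i.2⟩)) *
          ∏ i : V, ∑ x : X,
            h i x * ∏ a : {a : F // i ∈ N a}, φ i a.1 x (y ⟨(i, a.1), a.2⟩) := by
  classical
  set E := {e : V × F // e.1 ∈ N e.2}
  -- equivalence between edge labelings and per-factor labelings
  let σ : (E → Y) ≃ (∀ a : F, {i // i ∈ N a} → Y) :=
    { toFun := fun y a i => y ⟨(i.1, a), i.2⟩
      invFun := fun g e => g e.1.2 ⟨e.1.1, e.2⟩
      left_inv := fun y => funext fun e => rfl
      right_inv := fun g => funext fun a => funext fun i => rfl }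
  -- two sigma decompositions of the edge set
  let eqvF : E ≃ Σ a : F, {i // i ∈ N a} :=
    { toFun := fun e => ⟨e.1.2, ⟨e.1.1, e.2⟩⟩
      invFun := fun p => ⟨(p.2.1, p.1), p.2.2⟩
      left_inv := fun e => rfl
      right_inv := fun p => rfl }
  let eqvV : E ≃ Σ i : V, {a // i ∈ N a} :=
    { toFun := fun e => ⟨e.1.1, ⟨e.1.2, e.2⟩⟩
      invFun := fun p => ⟨(p.1, p.2.1), p.2.2⟩
      left_inv := fun e => rfl
      right_inv := fun p => rfl }
  have key : ∀ x : V → X,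
      (∏ a : F, f a (fun i => x i.1)) =
      ∑ g : ∀ a : F, ({i // i ∈ N a} → Y),
        (∏ a : F, fhat a (g a)) *
          ∏ a : F, ∏ i : {i // i ∈ N a}, φ i.1 a (x i.1) (g a i) := by
    intro x
    simp only [hf]
    rw [Fintype.prod_sum]
    exact Finset.sum_congr rfl fun g _ => (Finset.prod_mul_distrib)
  calc
    ∑ x : V → X, (∏ a : F, f a (fun i => x i.1)) * ∏ i : V, h i (x i)
        = ∑ g : ∀ a : F, ({i // i ∈ N a} → Y), ∑ x : V → X,
            (∏ a : F, fhat a (g a)) *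
              ((∏ a : F, ∏ i : {i // i ∈ N a}, φ i.1 a (x i.1) (g a i)) *
                ∏ i : V, h i (x i)) := by
          simp only [key, Finset.sum_mul, mul_assoc]
          rw [Finset.sum_comm]
    _ = ∑ g : ∀ a : F, ({i // i ∈ N a} → Y),
            (∏ a : F, fhat a (g a)) *
              ∏ i : V, ∑ x : X,
                h i x * ∏ a : {a : F // i ∈ N a}, φ i a.1 x (g a ⟨i, a.2⟩) := by
          refine Finset.sum_congr rfl fun g _ => ?_
          rw [← Finset.mul_sum]
          congr 1
          rw [Fintype.prod_sum (fun i x => h i x *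
            ∏ a : {a : F // i ∈ N a}, φ i a.1 x (g a ⟨i, a.2⟩))]
          refine Finset.sum_congr rfl fun x _ => ?_
          rw [Finset.prod_mul_distrib]
          rw [mul_comm]
          congr 1
          · -- double product swap via edge set
            calc (∏ a : F, ∏ i : {i // i ∈ N a}, φ i.1 a (x i.1) (g a i))
                = ∏ p : Σ a : F, {i // i ∈ N a}, φ p.2.1 p.1 (x p.2.1) (g p.1 p.2) := by
                  rw [← Finset.univ_sigma_univ, Finset.prod_sigma]
              _ = ∏ e : E, φ e.1.1 e.1.2 (x e.1.1) (g e.1.2 ⟨e.1.1, e.2⟩) :=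
                  (Fintype.prod_equiv eqvF _ _ fun e => rfl).symm
              _ = ∏ p : Σ i : V, {a // i ∈ N a}, φ p.1 p.2.1 (x p.1) (g p.2.1 ⟨p.1, p.2.2⟩) :=
                  Fintype.prod_equiv eqvV _ _ fun e => rfl
              _ = ∏ i : V, ∏ a : {a // i ∈ N a}, φ i a.1 (x i) (g a.1 ⟨i, a.2⟩) := by
                  rw [← Finset.univ_sigma_univ, Finset.prod_sigma]
    _ = ∑ y : E → Y,
          (∏ a : F, fhat a (fun i => y ⟨(i.1, a), i.2⟩)) *
          ∏ i : V, ∑ x : X,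
            h i x * ∏ a : {a : F // i ∈ N a}, φ i a.1 x (y ⟨(i, a.1), a.2⟩) := by
          exact (Fintype.sum_equiv σ _ _ fun y => rfl).symm
end

section
/- (Loop calculus for the binary alphabet) Let X = {0,1} and let ((b_i)_{i∈V}, (b_a)_{a∈F}) be a positive interior stationary point of the Bethe free energy of factor graph G, arising from BP messages (m_{i→a}, m_{a→i}). Then Z(G) = Z_Bethe · Σ_{E'⊆E} K_G(E'), where K_G(E') = ∏_{a∈F} ⟨∏_{i∈∂a,(i,a)∈E'} (X_i − η^i)/√(Var_{b_i}(X_i))⟩_{b_a} · ∏_{i∈V} ⟨((X_i − η^i)/√(Var_{b_i}(X_i)))^{d_i(E')}⟩_{b_i}, with η^i = b_i(1) and Var_{b_i}(X_i) = b_i(0) b_i(1), and moreover K_G(E') = 0 unless every variable node and every factor node has degree ≠ 1 in E' (i.e., E' is a generalized loop). -/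
open Finset

noncomputable section

variable {V F : Type*} [Fintype V] [Fintype F] [DecidableEq V] [DecidableEq F]

/-- The factor neighbors of a variable node `i`. -/
def nbrs (N : F → Finset V) (i : V) : Finset F := Finset.univ.filter (fun a => i ∈ N a)

/-- The edge set of the factor graph, as a finset of pairs. -/
def edges (N : F → Finset V) : Finset (V × F) := Finset.univ.filter (fun p => p.1 ∈ N p.2)

/-- The real value of a `{0,1}`-valued variable. -/
def bval (x : Bool) : ℝ := if x then 1 else 0

/-- `Z_a = ∑_{x_{∂a}} f_a(x_{∂a}) ∏_{i ∈ ∂a} m_{i→a}(x_i)`. -/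
def Za (N : F → Finset V) (f : (a : F) → ({i // i ∈ N a} → Bool) → ℝ)
    (mva : V → F → Bool → ℝ) (a : F) : ℝ :=
  ∑ xa : {i // i ∈ N a} → Bool, f a xa * ∏ i : {i // i ∈ N a}, mva i.1 a (xa i)

/-- `Z_i = ∑_x h_i(x) ∏_{a ∈ ∂i} m_{a→i}(x)`. -/
def Zi (N : F → Finset V) (h : V → Bool → ℝ) (mav : V → F → Bool → ℝ) (i : V) : ℝ :=
  ∑ x : Bool, h i x * ∏ a ∈ nbrs N i, mav i a x

/-- `Z_{i,a} = ∑_x m_{i→a}(x) m_{a→i}(x)`. -/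
def Zia (mva mav : V → F → Bool → ℝ) (i : V) (a : F) : ℝ :=
  ∑ x : Bool, mva i a x * mav i a x

/-- `Z_Bethe = ∏_a Z_a ∏_i Z_i ∏_{(i,a)∈E} Z_{i,a}⁻¹`. -/
def ZBethe (N : F → Finset V) (f : (a : F) → ({i // i ∈ N a} → Bool) → ℝ)
    (h : V → Bool → ℝ) (mva mav : V → F → Bool → ℝ) : ℝ :=
  (∏ a : F, Za N f mva a) * (∏ i : V, Zi N h mav i) *
  ∏ p ∈ edges N, (Zia mva mav p.1 p.2)⁻¹

/-- The factor pseudo-marginal `b_a`. -/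
def bfa (N : F → Finset V) (f : (a : F) → ({i // i ∈ N a} → Bool) → ℝ)
    (mva : V → F → Bool → ℝ) (a : F) (xa : {i // i ∈ N a} → Bool) : ℝ :=
  f a xa * (∏ i : {i // i ∈ N a}, mva i.1 a (xa i)) / Za N f mva a

/-- The variable pseudo-marginal `b_i`. -/
def bvi (N : F → Finset V) (h : V → Bool → ℝ) (mav : V → F → Bool → ℝ)
    (i : V) (x : Bool) : ℝ :=
  h i x * (∏ a ∈ nbrs N i, mav i a x) / Zi N h mav i

/-- `η^i = b_i(1) = ⟨X_i⟩_{b_i}`. -/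
def etaOf (N : F → Finset V) (h : V → Bool → ℝ) (mav : V → F → Bool → ℝ) (i : V) : ℝ :=
  bvi N h mav i true

/-- The standardized variable `(X_i - η^i)/√(Var_{b_i}(X_i))`,
with `Var_{b_i}(X_i) = b_i(0) b_i(1)`. -/
def stdz (N : F → Finset V) (h : V → Bool → ℝ) (mav : V → F → Bool → ℝ)
    (i : V) (x : Bool) : ℝ :=
  (bval x - etaOf N h mav i) / Real.sqrt (bvi N h mav i false * bvi N h mav i true)

/-- The degree `d_i(E')` of a variable node in an edge subset. -/
def degInV (E' : Finset (V × F)) (i : V) : ℕ := (E'.filter (fun p => p.1 = i)).card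

/-- The degree `d_a(E')` of a factor node in an edge subset. -/
def degInF (E' : Finset (V × F)) (a : F) : ℕ := (E'.filter (fun p => p.2 = a)).card

/-- The loop weight
`K_G(E') = ∏_a ⟨∏_{i∈∂a,(i,a)∈E'} (X_i-η^i)/√Var⟩_{b_a} ∏_i ⟨((X_i-η^i)/√Var)^{d_i(E')}⟩_{b_i}`. -/
def KG (N : F → Finset V) (f : (a : F) → ({i // i ∈ N a} → Bool) → ℝ)
    (h : V → Bool → ℝ) (mva mav : V → F → Bool → ℝ) (E' : Finset (V × F)) : ℝ :=
  (∏ a : F, ∑ xa : {i // i ∈ N a} → Bool,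
      bfa N f mva a xa *
        ∏ i ∈ Finset.univ.filter (fun i : {i // i ∈ N a} => (i.1, a) ∈ E'),
          stdz N h mav i.1 (xa i)) *
  ∏ i : V, ∑ x : Bool, bvi N h mav i x * (stdz N h mav i x) ^ (degInV E' i)

/-!
Give every factor `a` its own configuration `x_a` of `∂a` and every variable its own spin `y_i`,
all independent with laws `b_a` and `b_i`. With `s_i` the standardized spin, `K_G(E')` is the
expectation of `∏_{(i,a) ∈ E'} s_i(x_{a,i}) s_i(y_i)`, so `∑_{E' ⊆ E} K_G(E')` is the expectation of
`∏_{(i,a) ∈ E} (1 + s_i(x_{a,i}) s_i(y_i))`. For a two-point law `1 + s(x) s(y) = δ_{xy} / b(y)`,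
which ties every `x_a` to `y` and leaves `∑_y ∏_a b_a(y_{∂a}) ∏_i b_i(y_i)^{1 - d_i}`. Since
`m_{i→a} m_{a→i} = Z_{i,a} b_i` at a BP fixed point, this sum is `Z / Z_Bethe`.

A node of degree one in `E'` contributes the mean of a standardized spin, which vanishes: directly
for a variable node, and for a factor node because the `i`-marginal of `b_a` is proportional to `b_i`.
-/

def standardize (p : Bool → ℝ) (x : Bool) : ℝ :=
  (bval x - p true) / √(p false * p true)

theorem sum_mul_standardize_eq_zero {p : Bool → ℝ} (hp : p false + p true = 1) :
    ∑ x, p x * standardize p x = 0 := by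
  simp only [Fintype.sum_bool, standardize, bval, if_true, Bool.false_eq_true, if_false]
  linear_combination (-(p true) / √(p false * p true)) * hp

theorem one_add_standardize_mul {p : Bool → ℝ} (hp : p false + p true = 1)
    (hp₀ : 0 < p false) (hp₁ : 0 < p true) (x y : Bool) :
    1 + standardize p x * standardize p y = if x = y then (p y)⁻¹ else 0 := by
  have hvar : √(p false * p true) * √(p false * p true) = p false * p true :=
    Real.mul_self_sqrt (by positivity)
  rw [standardize, standardize, div_mul_div_comm, hvar]
  have hp' : p false = 1 - p true := by linarith
  have hq : 1 - p true ≠ 0 := by linarith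
  cases x <;> cases y <;>
    simp only [bval, if_true, Bool.false_eq_true, if_false, reduceCtorEq, hp'] <;>
    field_simp <;> ring

section LoopCalculus

variable {N : F → Finset V} {f : (a : F) → ({i // i ∈ N a} → Bool) → ℝ}
  {h : V → Bool → ℝ} {mva mav : V → F → Bool → ℝ}

section

omit [Fintype V] [DecidableEq F]

theorem mem_nbrs {i : V} {a : F} : a ∈ nbrs N i ↔ i ∈ N a := by
  simp [nbrs]

theorem Zi_pos (hh : ∀ i x, 0 < h i x) (hm2 : ∀ i a, i ∈ N a → ∀ x, 0 < mav i a x) (i : V) :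
    0 < Zi N h mav i :=
  sum_pos (fun x _ => mul_pos (hh i x) (prod_pos fun a ha => hm2 i a (mem_nbrs.mp ha) x))
    univ_nonempty

theorem bvi_pos (hh : ∀ i x, 0 < h i x) (hm2 : ∀ i a, i ∈ N a → ∀ x, 0 < mav i a x)
    (i : V) (x : Bool) : 0 < bvi N h mav i x :=
  div_pos (mul_pos (hh i x) (prod_pos fun a ha => hm2 i a (mem_nbrs.mp ha) x)) (Zi_pos hh hm2 i)

theorem bvi_false_add_bvi_true (hh : ∀ i x, 0 < h i x)
    (hm2 : ∀ i a, i ∈ N a → ∀ x, 0 < mav i a x) (i : V) :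
    bvi N h mav i false + bvi N h mav i true = 1 := by
  rw [bvi, bvi, ← add_div, div_eq_one_iff_eq (Zi_pos hh hm2 i).ne', Zi, Fintype.sum_bool,
    add_comm]

theorem sum_bvi_mul_stdz (hh : ∀ i x, 0 < h i x) (hm2 : ∀ i a, i ∈ N a → ∀ x, 0 < mav i a x)
    (i : V) : ∑ x, bvi N h mav i x * stdz N h mav i x = 0 :=
  sum_mul_standardize_eq_zero (bvi_false_add_bvi_true hh hm2 i)

theorem one_add_stdz_mul (hh : ∀ i x, 0 < h i x) (hm2 : ∀ i a, i ∈ N a → ∀ x, 0 < mav i a x)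
    (i : V) (x y : Bool) :
    1 + stdz N h mav i x * stdz N h mav i y = if x = y then (bvi N h mav i y)⁻¹ else 0 :=
  one_add_standardize_mul (bvi_false_add_bvi_true hh hm2 i) (bvi_pos hh hm2 i false)
    (bvi_pos hh hm2 i true) x y


end

section

omit [Fintype V]

theorem exists_mva_mul_mav_eq (hh : ∀ i x, 0 < h i x)
    (hm2 : ∀ i a, i ∈ N a → ∀ x, 0 < mav i a x)
    (hfix1 : ∀ (i : V) (a : F), i ∈ N a → ∃ c : ℝ, 0 < c ∧ ∀ x,
      mva i a x = c * (h i x * ∏ a' ∈ (nbrs N i).erase a, mav i a' x))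
    {i : V} {a : F} (hia : i ∈ N a) :
    ∃ c : ℝ, 0 < c ∧ ∀ x, mva i a x * mav i a x = c * bvi N h mav i x := by
  obtain ⟨c, hc, hmva⟩ := hfix1 i a hia
  refine ⟨c * Zi N h mav i, mul_pos hc (Zi_pos hh hm2 i), fun x => ?_⟩
  have hZi := (Zi_pos hh hm2 i).ne'
  rw [hmva, bvi, ← mul_prod_erase _ _ (mem_nbrs.mpr hia)]
  field_simp

theorem mva_mul_mav_eq_Zia_mul_bvi (hh : ∀ i x, 0 < h i x)
    (hm2 : ∀ i a, i ∈ N a → ∀ x, 0 < mav i a x)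
    (hfix1 : ∀ (i : V) (a : F), i ∈ N a → ∃ c : ℝ, 0 < c ∧ ∀ x,
      mva i a x = c * (h i x * ∏ a' ∈ (nbrs N i).erase a, mav i a' x))
    {i : V} {a : F} (hia : i ∈ N a) (x : Bool) :
    mva i a x * mav i a x = Zia mva mav i a * bvi N h mav i x := by
  obtain ⟨c, -, hc⟩ := exists_mva_mul_mav_eq hh hm2 hfix1 hia
  have hZia : Zia mva mav i a = c := by
    rw [Zia, Fintype.sum_bool, hc, hc, ← mul_add, add_comm, bvi_false_add_bvi_true hh hm2,
      mul_one]
  rw [hc, hZia]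

theorem Zia_pos (hh : ∀ i x, 0 < h i x)
    (hm2 : ∀ i a, i ∈ N a → ∀ x, 0 < mav i a x)
    (hfix1 : ∀ (i : V) (a : F), i ∈ N a → ∃ c : ℝ, 0 < c ∧ ∀ x,
      mva i a x = c * (h i x * ∏ a' ∈ (nbrs N i).erase a, mav i a' x))
    {i : V} {a : F} (hia : i ∈ N a) : 0 < Zia mva mav i a := by
  obtain ⟨c, hc, hcx⟩ := exists_mva_mul_mav_eq hh hm2 hfix1 hia
  rw [Zia, Fintype.sum_bool, hcx, hcx]
  exact add_pos (mul_pos hc (bvi_pos hh hm2 i true)) (mul_pos hc (bvi_pos hh hm2 i false))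

omit [Fintype F] [DecidableEq F] in
/-- Where `Z_a = 0`, `b_a` takes the junk value `0`, but then `f_a ≡ 0` as the messages are
positive. -/
theorem f_mul_prod_mva_eq_Za_mul_bfa (hf : ∀ a xa, 0 ≤ f a xa)
    (hm1 : ∀ i a, i ∈ N a → ∀ x, 0 < mva i a x) (a : F) (xa : {i // i ∈ N a} → Bool) :
    f a xa * ∏ i, mva i.1 a (xa i) = Za N f mva a * bfa N f mva a xa := by
  have hterm : ∀ ya : {i // i ∈ N a} → Bool, 0 ≤ f a ya * ∏ i, mva i.1 a (ya i) :=
    fun ya => mul_nonneg (hf a ya) (prod_nonneg fun i _ => (hm1 i.1 a i.2 _).le)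
  have hZa : 0 ≤ Za N f mva a := sum_nonneg fun ya _ => hterm ya
  rcases hZa.eq_or_lt with hZa | hZa
  · rw [← hZa, zero_mul]
    exact (sum_eq_zero_iff_of_nonneg fun ya _ => hterm ya).mp hZa.symm xa (mem_univ xa)
  · rw [bfa, mul_div_cancel₀ _ hZa.ne']

theorem exists_sum_bfa_eq_mul_bvi (hh : ∀ i x, 0 < h i x)
    (hm2 : ∀ i a, i ∈ N a → ∀ x, 0 < mav i a x)
    (hfix1 : ∀ (i : V) (a : F), i ∈ N a → ∃ c : ℝ, 0 < c ∧ ∀ x,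
      mva i a x = c * (h i x * ∏ a' ∈ (nbrs N i).erase a, mav i a' x))
    (hfix2 : ∀ (i : V) (a : F) (hia : i ∈ N a), ∃ c : ℝ, 0 < c ∧ ∀ x,
      mav i a x = c * ∑ xa ∈ Finset.univ.filter
          (fun xa : {j // j ∈ N a} → Bool => xa ⟨i, hia⟩ = x),
        f a xa * ∏ j ∈ Finset.univ.erase (⟨i, hia⟩ : {j // j ∈ N a}), mva j.1 a (xa j))
    {a : F} (i : {i // i ∈ N a}) :
    ∃ C : ℝ, ∀ x, ∑ xa with xa i = x, bfa N f mva a xa = C * bvi N h mav i x := by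
  obtain ⟨c, hc, hmav⟩ := hfix2 i a i.2
  refine ⟨Zia mva mav i a / (c * Za N f mva a), fun x => ?_⟩
  have hfactor : ∀ xa ∈ ({xa | xa i = x} : Finset _), bfa N f mva a xa =
      mva i a x / Za N f mva a * (f a xa * ∏ j ∈ univ.erase i, mva j.1 a (xa j)) := by
    intro xa hxa
    rw [bfa, ← mul_prod_erase _ _ (mem_univ i), (mem_filter.mp hxa).2]
    ring
  have hsum : ∑ xa with xa i = x, f a xa * ∏ j ∈ univ.erase i, mva j.1 a (xa j) =
      mav i a x / c := by
    rw [hmav x, mul_div_cancel_left₀ _ hc.ne']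
  rw [sum_congr rfl hfactor, ← mul_sum, hsum, div_mul_div_comm,
    mva_mul_mav_eq_Zia_mul_bvi hh hm2 hfix1 i.2 x]
  ring

end

section

variable {M : Type*} [CommMonoid M]

omit [DecidableEq F] in
theorem mem_edges {p : V × F} : p ∈ edges N ↔ p.1 ∈ N p.2 := by
  simp [edges]


omit [DecidableEq F] in
theorem prod_edges_eq_prod_nbrs (g : V × F → M) :
    ∏ e ∈ edges N, g e = ∏ i, ∏ a ∈ nbrs N i, g (i, a) :=
  prod_finset_product _ _ _ fun e => by simp [mem_edges, mem_nbrs]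

theorem prod_of_subset_edges {E' : Finset (V × F)} (hE' : E' ⊆ edges N) (g : V × F → M) :
    ∏ e ∈ E', g e = ∏ a, ∏ i : {i // i ∈ N a} with (i.1, a) ∈ E', g (i.1, a) := by
  rw [prod_finset_product_right E' univ (fun a => (N a).filter fun i => (i, a) ∈ E')
    fun e => ⟨fun he => by simpa [he] using mem_edges.mp (hE' he), fun he => by simp_all⟩]
  refine prod_congr rfl fun a _ => ?_
  rw [prod_filter, prod_filter, ← prod_coe_sort (N a)]

theorem prod_edges_eq_prod_factor (g : V × F → M) :
    ∏ e ∈ edges N, g e = ∏ a, ∏ i : {i // i ∈ N a}, g (i.1, a) := by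
  rw [prod_of_subset_edges subset_rfl]
  simp [mem_edges]

omit [Fintype F] [DecidableEq F] in
theorem prod_pow_degInV (E' : Finset (V × F)) (g : V → M) :
    ∏ i, g i ^ degInV E' i = ∏ e ∈ E', g e.1 := by
  rw [← prod_fiberwise E' Prod.fst]
  refine prod_congr rfl fun i _ => ?_
  rw [degInV, ← prod_const, prod_congr rfl fun e he => congrArg g (mem_filter.mp he).2]

theorem card_filter_eq_degInF {E' : Finset (V × F)} (hE' : E' ⊆ edges N) (a : F) :
    #{i : {i // i ∈ N a} | (i.1, a) ∈ E'} = degInF E' a := by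
  refine card_bij (fun i _ => (i.1, a)) (fun i hi => by simpa using hi)
    (fun i _ j _ hij => Subtype.ext (Prod.ext_iff.mp hij).1) fun e he => ?_
  obtain ⟨heE, rfl⟩ := mem_filter.mp he
  exact ⟨⟨e.1, mem_edges.mp (hE' heE)⟩, by simpa using heE, rfl⟩


end

theorem weight_eq_ZBethe_mul (hh : ∀ i x, 0 < h i x) (hf : ∀ a xa, 0 ≤ f a xa)
    (hm1 : ∀ i a, i ∈ N a → ∀ x, 0 < mva i a x) (hm2 : ∀ i a, i ∈ N a → ∀ x, 0 < mav i a x)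
    (hfix1 : ∀ (i : V) (a : F), i ∈ N a → ∃ c : ℝ, 0 < c ∧ ∀ x,
      mva i a x = c * (h i x * ∏ a' ∈ (nbrs N i).erase a, mav i a' x))
    (x : V → Bool) :
    (∏ a, f a (fun i => x i.1)) * ∏ i, h i (x i) =
      ZBethe N f h mva mav * ((∏ a, bfa N f mva a (fun i => x i.1)) * (∏ i, bvi N h mav i (x i)) *
        ∏ e ∈ edges N, (bvi N h mav e.1 (x e.1))⁻¹) := by
  have hfactors : (∏ a, f a (fun i => x i.1)) * ∏ e ∈ edges N, mva e.1 e.2 (x e.1) =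
      (∏ a, Za N f mva a) * ∏ a, bfa N f mva a (fun i => x i.1) := by
    rw [prod_edges_eq_prod_factor, ← prod_mul_distrib, ← prod_mul_distrib]
    exact prod_congr rfl fun a _ => f_mul_prod_mva_eq_Za_mul_bfa hf hm1 a _
  have hvariables : (∏ i, h i (x i)) * ∏ e ∈ edges N, mav e.1 e.2 (x e.1) =
      (∏ i, Zi N h mav i) * ∏ i, bvi N h mav i (x i) := by
    rw [prod_edges_eq_prod_nbrs, ← prod_mul_distrib, ← prod_mul_distrib]
    exact prod_congr rfl fun i _ => by rw [bvi, mul_div_cancel₀ _ (Zi_pos hh hm2 i).ne']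
  have hedges : ∏ e ∈ edges N, mva e.1 e.2 (x e.1) * mav e.1 e.2 (x e.1) =
      (∏ e ∈ edges N, Zia mva mav e.1 e.2) * ∏ e ∈ edges N, bvi N h mav e.1 (x e.1) := by
    rw [← prod_mul_distrib]
    exact prod_congr rfl fun e he => mva_mul_mav_eq_Zia_mul_bvi hh hm2 hfix1 (mem_edges.mp he) _
  have hZia : ∏ e ∈ edges N, Zia mva mav e.1 e.2 ≠ 0 :=
    (prod_pos fun e he => Zia_pos hh hm2 hfix1 (mem_edges.mp he)).ne'
  have hbvi : ∏ e ∈ edges N, bvi N h mav e.1 (x e.1) ≠ 0 :=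
    (prod_pos fun e _ => bvi_pos hh hm2 e.1 _).ne'
  rw [prod_mul_distrib] at hedges
  rw [ZBethe, prod_inv_distrib, prod_inv_distrib]
  field_simp
  linear_combination (∏ i, h i (x i)) * (∏ e ∈ edges N, mav e.1 e.2 (x e.1)) * hfactors +
    (∏ a, Za N f mva a) * (∏ a, bfa N f mva a (fun i => x i.1)) * hvariables -
    (∏ a, f a (fun i => x i.1)) * (∏ i, h i (x i)) * hedges

/-- `x_{a,i}` at the edge `(i, a)`; the value `false` off the edges is never used. -/
def edgeSpin (xa : (a : F) → {i // i ∈ N a} → Bool) (e : V × F) : Bool :=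
  if he : e.1 ∈ N e.2 then xa e.2 ⟨e.1, he⟩ else false

omit [Fintype V] [Fintype F] [DecidableEq F] in
theorem edgeSpin_mk (xa : (a : F) → {i // i ∈ N a} → Bool) (a : F) (i : {i // i ∈ N a}) :
    edgeSpin xa (i.1, a) = xa a i :=
  dif_pos i.2

omit [DecidableEq F] in
theorem forall_edgeSpin_eq_iff (xa : (a : F) → {i // i ∈ N a} → Bool) (y : V → Bool) :
    (∀ e ∈ edges N, edgeSpin xa e = y e.1) ↔ xa = fun _ i => y i.1 := by
  constructor
  · intro hxa
    funext a i
    simpa [edgeSpin_mk] using hxa (i.1, a) (mem_edges.mpr i.2)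
  · rintro rfl ⟨i, a⟩ he
    exact edgeSpin_mk _ a ⟨i, mem_edges.mp he⟩

theorem KG_eq_sum_sum {E' : Finset (V × F)} (hE' : E' ⊆ edges N) :
    KG N f h mva mav E' = ∑ xa : (a : F) → {i // i ∈ N a} → Bool, ∑ y : V → Bool,
      (∏ a, bfa N f mva a (xa a)) * (∏ i, bvi N h mav i (y i)) *
        ∏ e ∈ E', stdz N h mav e.1 (edgeSpin xa e) * stdz N h mav e.1 (y e.1) := by
  rw [KG, prod_univ_sum, prod_univ_sum, Fintype.piFinset_univ, Fintype.piFinset_univ,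
    sum_mul_sum]
  refine sum_congr rfl fun xa _ => sum_congr rfl fun y _ => ?_
  rw [prod_mul_distrib, prod_mul_distrib, prod_mul_distrib,
    prod_pow_degInV E' fun i => stdz N h mav i (y i),
    prod_of_subset_edges hE' fun e => stdz N h mav e.1 (edgeSpin xa e)]
  simp only [edgeSpin_mk]
  ring

theorem sum_powerset_KG_eq (hh : ∀ i x, 0 < h i x) (hm2 : ∀ i a, i ∈ N a → ∀ x, 0 < mav i a x) :
    ∑ E' ∈ (edges N).powerset, KG N f h mva mav E' =
      ∑ y : V → Bool, (∏ a, bfa N f mva a (fun i => y i.1)) * (∏ i, bvi N h mav i (y i)) *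
        ∏ e ∈ edges N, (bvi N h mav e.1 (y e.1))⁻¹ := by
  have hdelta : ∀ (xa : (a : F) → {i // i ∈ N a} → Bool) (y : V → Bool),
      ∏ e ∈ edges N, (1 + stdz N h mav e.1 (edgeSpin xa e) * stdz N h mav e.1 (y e.1)) =
        if xa = (fun _ i => y i.1) then ∏ e ∈ edges N, (bvi N h mav e.1 (y e.1))⁻¹ else 0 := by
    intro xa y
    simp only [one_add_stdz_mul hh hm2, prod_ite_zero, forall_edgeSpin_eq_iff]
  calc ∑ E' ∈ (edges N).powerset, KG N f h mva mav E'
      = ∑ E' ∈ (edges N).powerset, ∑ xa : (a : F) → {i // i ∈ N a} → Bool, ∑ y : V → Bool,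
          (∏ a, bfa N f mva a (xa a)) * (∏ i, bvi N h mav i (y i)) *
            ∏ e ∈ E', stdz N h mav e.1 (edgeSpin xa e) * stdz N h mav e.1 (y e.1) :=
        sum_congr rfl fun E' hE' => KG_eq_sum_sum (mem_powerset.mp hE')
    _ = ∑ xa : (a : F) → {i // i ∈ N a} → Bool, ∑ y : V → Bool,
          (∏ a, bfa N f mva a (xa a)) * (∏ i, bvi N h mav i (y i)) *
            if xa = (fun _ i => y i.1) then ∏ e ∈ edges N, (bvi N h mav e.1 (y e.1))⁻¹ else 0 := by
        rw [sum_comm]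
        refine sum_congr rfl fun xa _ => ?_
        rw [sum_comm]
        refine sum_congr rfl fun y _ => ?_
        rw [← mul_sum, ← prod_one_add, hdelta]
    _ = _ := by
        rw [sum_comm]
        simp only [mul_ite, mul_zero, Fintype.sum_ite_eq']

theorem KG_eq_zero_of_degInV_eq_one (hh : ∀ i x, 0 < h i x)
    (hm2 : ∀ i a, i ∈ N a → ∀ x, 0 < mav i a x) {E' : Finset (V × F)} {i : V}
    (hi : degInV E' i = 1) : KG N f h mva mav E' = 0 := by
  refine mul_eq_zero_of_right _ (prod_eq_zero (mem_univ i) ?_)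
  simp only [hi, pow_one]
  exact sum_bvi_mul_stdz hh hm2 i

theorem KG_eq_zero_of_degInF_eq_one (hh : ∀ i x, 0 < h i x)
    (hm2 : ∀ i a, i ∈ N a → ∀ x, 0 < mav i a x)
    (hfix1 : ∀ (i : V) (a : F), i ∈ N a → ∃ c : ℝ, 0 < c ∧ ∀ x,
      mva i a x = c * (h i x * ∏ a' ∈ (nbrs N i).erase a, mav i a' x))
    (hfix2 : ∀ (i : V) (a : F) (hia : i ∈ N a), ∃ c : ℝ, 0 < c ∧ ∀ x,
      mav i a x = c * ∑ xa ∈ Finset.univ.filter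
          (fun xa : {j // j ∈ N a} → Bool => xa ⟨i, hia⟩ = x),
        f a xa * ∏ j ∈ Finset.univ.erase (⟨i, hia⟩ : {j // j ∈ N a}), mva j.1 a (xa j))
    {E' : Finset (V × F)} (hE' : E' ⊆ edges N) {a : F} (ha : degInF E' a = 1) :
    KG N f h mva mav E' = 0 := by
  obtain ⟨i, hi⟩ := card_eq_one.mp ((card_filter_eq_degInF hE' a).trans ha)
  obtain ⟨C, hC⟩ := exists_sum_bfa_eq_mul_bvi hh hm2 hfix1 hfix2 i
  refine mul_eq_zero_of_left (prod_eq_zero (mem_univ a) ?_) _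
  calc ∑ xa, bfa N f mva a xa * ∏ j ∈ {j : {j // j ∈ N a} | (j.1, a) ∈ E'}, stdz N h mav j (xa j)
      = ∑ x, ∑ xa with xa i = x, bfa N f mva a xa * stdz N h mav i x := by
        rw [hi, ← sum_fiberwise univ fun xa => xa i]
        refine sum_congr rfl fun x _ => sum_congr rfl fun xa hxa => ?_
        rw [prod_singleton, (mem_filter.mp hxa).2]
    _ = C * ∑ x, bvi N h mav i x * stdz N h mav i x := by
        simp only [← sum_mul, hC, mul_sum, mul_assoc]
    _ = 0 := by rw [sum_bvi_mul_stdz hh hm2, mul_zero]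

end LoopCalculus

theorem binary_loop_calculus_general
    (N : F → Finset V)
    (f : (a : F) → ({i // i ∈ N a} → Bool) → ℝ)
    (h : V → Bool → ℝ)
    (mva mav : V → F → Bool → ℝ)
    (hh : ∀ i x, 0 < h i x)
    (hf : ∀ a xa, 0 ≤ f a xa)
    (hm1 : ∀ (i : V) (a : F), i ∈ N a → ∀ x, 0 < mva i a x)
    (hm2 : ∀ (i : V) (a : F), i ∈ N a → ∀ x, 0 < mav i a x)
    (hfix1 : ∀ (i : V) (a : F), i ∈ N a → ∃ c : ℝ, 0 < c ∧ ∀ x,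
      mva i a x = c * (h i x * ∏ a' ∈ (nbrs N i).erase a, mav i a' x))
    (hfix2 : ∀ (i : V) (a : F) (hia : i ∈ N a), ∃ c : ℝ, 0 < c ∧ ∀ x,
      mav i a x = c * ∑ xa ∈ Finset.univ.filter
          (fun xa : {j // j ∈ N a} → Bool => xa ⟨i, hia⟩ = x),
        f a xa * ∏ j ∈ Finset.univ.erase (⟨i, hia⟩ : {j // j ∈ N a}), mva j.1 a (xa j)) :
    (∑ x : V → Bool, (∏ a : F, f a (fun i => x i.1)) * ∏ i : V, h i (x i)
      = ZBethe N f h mva mav * ∑ E' ∈ (edges N).powerset, KG N f h mva mav E') ∧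
    (∀ E' ∈ (edges N).powerset, KG N f h mva mav E' ≠ 0 →
      (∀ i : V, degInV E' i ≠ 1) ∧ (∀ a : F, degInF E' a ≠ 1)) := by
  refine ⟨?_, fun E' hE' hK => ⟨fun i hi => hK ?_, fun a ha => hK ?_⟩⟩
  · rw [sum_powerset_KG_eq hh hm2, mul_sum]
    exact sum_congr rfl fun x _ => weight_eq_ZBethe_mul hh hf hm1 hm2 hfix1 x
  · exact KG_eq_zero_of_degInV_eq_one hh hm2 hi
  · exact KG_eq_zero_of_degInF_eq_one hh hm2 hfix1 hfix2 (mem_powerset.mp hE') ha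

/-- **loop calculus for the binary alphabet.**
At a positive interior BP fixed point of a binary factor graph,
`Z(G) = Z_Bethe ∑_{E' ⊆ E} K_G(E')`, and `K_G(E') = 0` unless `E'` is a
generalized loop (every variable and factor node has degree `≠ 1` in `E'`). -/
theorem binary_loop_calculus
    (N : F → Finset V)
    (f : (a : F) → ({i // i ∈ N a} → Bool) → ℝ)
    (h : V → Bool → ℝ)
    (mva mav : V → F → Bool → ℝ)
    (hh : ∀ i x, 0 < h i x)
    (hf : ∀ a xa, 0 ≤ f a xa)
    (hslice : ∀ (a : F) (i : {i // i ∈ N a}) (z : Bool),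
      ∃ xa : {i // i ∈ N a} → Bool, xa i = z ∧ 0 < f a xa)
    (hm1 : ∀ (i : V) (a : F), i ∈ N a → ∀ x, 0 < mva i a x)
    (hm2 : ∀ (i : V) (a : F), i ∈ N a → ∀ x, 0 < mav i a x)
    (hfix1 : ∀ (i : V) (a : F), i ∈ N a → ∃ c : ℝ, 0 < c ∧ ∀ x,
      mva i a x = c * (h i x * ∏ a' ∈ (nbrs N i).erase a, mav i a' x))
    (hfix2 : ∀ (i : V) (a : F) (hia : i ∈ N a), ∃ c : ℝ, 0 < c ∧ ∀ x,
      mav i a x = c * ∑ xa ∈ Finset.univ.filter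
          (fun xa : {j // j ∈ N a} → Bool => xa ⟨i, hia⟩ = x),
        f a xa * ∏ j ∈ Finset.univ.erase (⟨i, hia⟩ : {j // j ∈ N a}), mva j.1 a (xa j)) :
    (∑ x : V → Bool, (∏ a : F, f a (fun i => x i.1)) * ∏ i : V, h i (x i)
      = ZBethe N f h mva mav * ∑ E' ∈ (edges N).powerset, KG N f h mva mav E') ∧
    (∀ E' ∈ (edges N).powerset, KG N f h mva mav E' ≠ 0 →
      (∀ i : V, degInV E' i ≠ 1) ∧ (∀ a : F, degInF E' a ≠ 1)) :=
  binary_loop_calculus_general N f h mva mav hh hf hm1 hm2 hfix1 hfix2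
end
end

section
/- (Simple-loop weight as a trace in the Gaussian case, single cycle) Let the factor graph be a single cycle with Gaussian pseudo-marginals at the BP fixed point: variables i_1,...,i_ℓ connected cyclically by pairwise factors a_1,...,a_ℓ, with joint Gaussian beliefs b_{a_s} on (X_{i_s}, X_{i_{s+1}}) (indices mod ℓ) whose one-variable marginals are the Gaussian b_{i_s}. Define c = ∏_{s=1}^{ℓ} Cov_{b_{a_s}}(X_{i_s}, X_{i_{s+1}}) / ∏_{s=1}^{ℓ} Var_{b_{i_s}}(X_{i_s}), and assume |c| < 1. Then ∫ (b_{i_1,E'}(v,v) − b_{i_1}(v)^2)/b_{i_1}(v) dv = c/(1−c), where b_{i_1,E'}(x, x') = ∫ [b_{a_1}(x, x_2) ⋯ b_{a_ℓ}(x_ℓ, x')/∏_{s=2}^{ℓ} b_{i_s}(x_s)] dx_2⋯dx_ℓ. -/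
/-!
Each pairwise belief factors as `b_{a_s}(x_s, x_{s+1}) = b_{i_s}(x_s) K_s(x_s, x_{s+1})`, where
`K_s` is the Gaussian conditional density of `X_{i_{s+1}}` given `X_{i_s}`, with regression
coefficient `Cov_s / Var_s`. The marginals `b_{i_2}, …, b_{i_ℓ}` cancel against the denominator,
so `b_{i_1,E'}(x, x') = b_{i_1}(x) ∫ K_1 ⋯ K_ℓ`. Integrating out the intermediate variables one
at a time (Chapman–Kolmogorov for Gaussian kernels) composes the regressions: the coefficients
multiply to `c` and the residual variance telescopes to `Var (1 - c²)`, so `b_{i_1,E'}` is the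
bivariate Gaussian with marginals `b_{i_1}` and correlation `c`. On the diagonal,
`b_{i_1,E'}(v, v) / b_{i_1}(v)` is `|1 - c|⁻¹` times a Gaussian density in `v`, so the loop
weight is `1 / (1 - c) - 1`.
-/

open MeasureTheory Real Finset

noncomputable section

/-- The density of `N(μ, s)` (with `s` the variance). -/
def gauss1 (μ s x : ℝ) : ℝ :=
  (Real.sqrt (2 * Real.pi * s))⁻¹ * Real.exp (-(x - μ)^2 / (2 * s))

/-- The density of a bivariate normal with means `μ1, μ2`, variances `s1, s2`
and covariance `c` (assumed nondegenerate: `s1*s2 - c^2 > 0`). -/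
def gauss2 (μ1 μ2 s1 s2 c x y : ℝ) : ℝ :=
  (2 * Real.pi * Real.sqrt (s1 * s2 - c^2))⁻¹ *
    Real.exp (-(s2 * (x - μ1)^2 - 2 * c * (x - μ1) * (y - μ2) + s1 * (y - μ2)^2)
      / (2 * (s1 * s2 - c^2)))

/-- The unrolled chain of variables along the cycle: position `0` is `x`,
positions `1, …, ℓ-1` are the integration variables `w`, and position `ℓ` is `x'`. -/
def cyc (ℓ : ℕ) (x x' : ℝ) (w : Fin (ℓ - 1) → ℝ) (tn : ℕ) : ℝ :=
  if tn = 0 then x else if h : tn - 1 < ℓ - 1 then w ⟨tn - 1, h⟩ else x'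

lemma gauss1_nonneg (μ s x : ℝ) : 0 ≤ gauss1 μ s x := by
  unfold gauss1; positivity

lemma gauss1_pos {s : ℝ} (hs : 0 < s) (μ x : ℝ) : 0 < gauss1 μ s x :=
  ProbabilityTheory.gaussianPDFReal_pos μ ⟨s, hs.le⟩ x (NNReal.coe_ne_zero.mp hs.ne')

lemma integrable_gauss1 {s : ℝ} (hs : 0 ≤ s) (μ : ℝ) : Integrable (gauss1 μ s) :=
  ProbabilityTheory.integrable_gaussianPDFReal μ ⟨s, hs⟩

lemma integral_gauss1 {s : ℝ} (hs : 0 < s) (μ : ℝ) : ∫ x, gauss1 μ s x = 1 :=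
  ProbabilityTheory.integral_gaussianPDFReal_eq_one μ (v := ⟨s, hs.le⟩)
    (NNReal.coe_ne_zero.mp hs.ne')

lemma gauss1_affine_mean_self {c : ℝ} (hc : c ≠ 1) (μ s v : ℝ) :
    gauss1 (μ + c * (v - μ)) s v = |1 - c|⁻¹ * gauss1 μ (s / (1 - c) ^ 2) v := by
  have habs : |1 - c| ≠ 0 := abs_ne_zero.mpr (sub_ne_zero.mpr hc.symm)
  have hsqrt : √(2 * π * (s / (1 - c) ^ 2)) = √(2 * π * s) / |1 - c| := by
    rw [mul_div_assoc', Real.sqrt_div' _ (sq_nonneg _), Real.sqrt_sq_eq_abs]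
  have hexp : -(v - (μ + c * (v - μ))) ^ 2 / (2 * s) = -(v - μ) ^ 2 / (2 * (s / (1 - c) ^ 2)) := by
    rw [mul_div_assoc', div_div_eq_mul_div]; ring
  unfold gauss1
  rw [hsqrt, hexp, inv_div, div_eq_mul_inv |1 - c|, ← mul_assoc, inv_mul_cancel_left₀ habs]

lemma gauss2_comm (μ1 μ2 s1 s2 c x y : ℝ) :
    gauss2 μ1 μ2 s1 s2 c x y = gauss2 μ2 μ1 s2 s1 c y x := by
  unfold gauss2; ring_nf

lemma gauss2_eq_gauss1_mul_gauss1 {s1 s2 c : ℝ} (hs1 : 0 < s1) (hc : c ^ 2 < s1 * s2)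
    (μ1 μ2 x y : ℝ) :
    gauss2 μ1 μ2 s1 s2 c x y =
      gauss1 μ1 s1 x * gauss1 (μ2 + c / s1 * (x - μ1)) (s2 - c ^ 2 / s1) y := by
  have hD : 0 < s1 * s2 - c ^ 2 := by linarith
  have hcond : s2 - c ^ 2 / s1 = (s1 * s2 - c ^ 2) / s1 := by field_simp
  have hsqrt : √(2 * π * s1) * √(2 * π * (s2 - c ^ 2 / s1)) = 2 * π * √(s1 * s2 - c ^ 2) := by
    rw [← Real.sqrt_mul (by positivity),
      show 2 * π * s1 * (2 * π * (s2 - c ^ 2 / s1)) = (2 * π) ^ 2 * (s1 * s2 - c ^ 2) by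
        field_simp,
      Real.sqrt_mul (by positivity), Real.sqrt_sq (by positivity)]
  unfold gauss1 gauss2
  rw [mul_mul_mul_comm, ← Real.exp_add, ← mul_inv, hsqrt, hcond]
  congr 2
  rw [div_add_div _ _ (by positivity) (by positivity),
    div_eq_div_iff (by positivity) (by positivity)]
  field_simp
  ring

lemma gauss2_eq_gauss1_mul_gauss1_swap {s1 s2 c : ℝ} (hs2 : 0 < s2) (hc : c ^ 2 < s1 * s2)
    (μ1 μ2 x y : ℝ) :
    gauss2 μ1 μ2 s1 s2 c x y =
      gauss1 μ2 s2 y * gauss1 (μ1 + c / s2 * (y - μ2)) (s1 - c ^ 2 / s2) x := by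
  rw [gauss2_comm, gauss2_eq_gauss1_mul_gauss1 hs2 (by linarith)]

lemma integral_gauss2_left {s1 s2 c : ℝ} (hs2 : 0 < s2) (hc : c ^ 2 < s1 * s2)
    (μ1 μ2 y : ℝ) : ∫ x, gauss2 μ1 μ2 s1 s2 c x y = gauss1 μ2 s2 y := by
  have hs1 : 0 < s1 - c ^ 2 / s2 := by rw [sub_pos, div_lt_iff₀ hs2]; linarith
  simp_rw [gauss2_eq_gauss1_mul_gauss1_swap hs2 hc, integral_const_mul, integral_gauss1 hs1,
    mul_one]

lemma integrable_gauss2_left {s1 s2 c : ℝ} (hs2 : 0 < s2) (hc : c ^ 2 < s1 * s2)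
    (μ1 μ2 y : ℝ) : Integrable fun x => gauss2 μ1 μ2 s1 s2 c x y := by
  have hs1 : 0 < s1 - c ^ 2 / s2 := by rw [sub_pos, div_lt_iff₀ hs2]; linarith
  simp_rw [gauss2_eq_gauss1_mul_gauss1_swap hs2 hc]
  exact (integrable_gauss1 hs1.le _).const_mul _

lemma gauss1_mul_gauss1_eq_gauss2 {v t : ℝ} (hv : 0 < v) (ht : 0 < t) (a p β q y z : ℝ) :
    gauss1 a v y * gauss1 (p + β * (y - q)) t z =
      gauss2 a (p + β * (a - q)) v (t + β ^ 2 * v) (β * v) y z := by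
  rw [gauss2_eq_gauss1_mul_gauss1 hv (by nlinarith)]
  congr 2 <;> · field_simp; ring

lemma integrable_gauss1_mul_gauss1 {v t : ℝ} (hv : 0 < v) (ht : 0 < t) (a p β q z : ℝ) :
    Integrable fun y => gauss1 a v y * gauss1 (p + β * (y - q)) t z := by
  simp_rw [gauss1_mul_gauss1_eq_gauss2 hv ht]
  exact integrable_gauss2_left (by positivity) (by nlinarith) _ _ _

lemma integral_gauss1_mul_gauss1 {v t : ℝ} (hv : 0 < v) (ht : 0 < t) (a p β q z : ℝ) :
    ∫ y, gauss1 a v y * gauss1 (p + β * (y - q)) t z =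
      gauss1 (p + β * (a - q)) (t + β ^ 2 * v) z := by
  simp_rw [gauss1_mul_gauss1_eq_gauss2 hv ht]
  exact integral_gauss2_left (by positivity) (by nlinarith) _ _ _

lemma integral_gauss2_diag_sub_sq_div_gauss1 {s c : ℝ} (hs : 0 < s) (hc : |c| < 1) (μ : ℝ) :
    ∫ v, (gauss2 μ μ s s (c * s) v v - gauss1 μ s v ^ 2) / gauss1 μ s v = c / (1 - c) := by
  obtain ⟨hc₁, hc₂⟩ := abs_lt.mp hc
  have hcs : (c * s) ^ 2 < s * s := by
    have : c ^ 2 < 1 := by nlinarith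
    nlinarith [mul_pos hs hs]
  have hσ : 0 < (s - (c * s) ^ 2 / s) / (1 - c) ^ 2 := by
    have : 0 < s - (c * s) ^ 2 / s := by rw [sub_pos, div_lt_iff₀ hs]; linarith
    positivity
  have hpoint : ∀ v, (gauss2 μ μ s s (c * s) v v - gauss1 μ s v ^ 2) / gauss1 μ s v =
      |1 - c|⁻¹ * gauss1 μ ((s - (c * s) ^ 2 / s) / (1 - c) ^ 2) v - gauss1 μ s v := by
    intro v
    rw [gauss2_eq_gauss1_mul_gauss1 hs hcs, mul_div_cancel_right₀ c hs.ne',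
      gauss1_affine_mean_self hc₂.ne, pow_two (gauss1 μ s v), ← mul_sub,
      mul_div_cancel_left₀ _ (gauss1_pos hs μ v).ne']
  simp_rw [hpoint]
  rw [integral_sub ((integrable_gauss1 hσ.le μ).const_mul _) (integrable_gauss1 hs.le μ),
    integral_const_mul, integral_gauss1 hσ, integral_gauss1 hs, abs_of_pos (by linarith)]
  field_simp
  ring

lemma volume_preserving_snoc {α : Type*} [MeasureSpace α] [SigmaFinite (volume : Measure α)]
    {n : ℕ} :
    MeasurePreserving (fun p : α × (Fin n → α) => (Fin.snoc p.2 p.1 : Fin (n + 1) → α)) := by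
  convert (volume_preserving_piFinSuccAbove (fun _ : Fin (n + 1) => α) (Fin.last n)).symm
    using 1
  ext p : 1
  simp [MeasurableEquiv.piFinSuccAbove_symm_apply, Fin.insertNthEquiv, Fin.insertNth_last']

lemma measurableEmbedding_snoc {α : Type*} [MeasurableSpace α] {n : ℕ} :
    MeasurableEmbedding (fun p : α × (Fin n → α) => (Fin.snoc p.2 p.1 : Fin (n + 1) → α)) := by
  convert (MeasurableEquiv.piFinSuccAbove (fun _ : Fin (n + 1) => α)
    (Fin.last n)).symm.measurableEmbedding using 1
  ext p : 1
  simp [MeasurableEquiv.piFinSuccAbove_symm_apply, Fin.insertNthEquiv, Fin.insertNth_last']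

lemma integrable_comp_snoc_iff {α E : Type*} [MeasureSpace α] [SigmaFinite (volume : Measure α)]
    [NormedAddCommGroup E] {n : ℕ} {F : (Fin (n + 1) → α) → E} :
    Integrable (fun p : α × (Fin n → α) => F (Fin.snoc p.2 p.1)) ↔ Integrable F :=
  volume_preserving_snoc.integrable_comp_emb measurableEmbedding_snoc

lemma integral_comp_snoc {α E : Type*} [MeasureSpace α] [SigmaFinite (volume : Measure α)]
    [NormedAddCommGroup E] [NormedSpace ℝ E] {n : ℕ} (F : (Fin (n + 1) → α) → E) :
    ∫ p : α × (Fin n → α), F (Fin.snoc p.2 p.1) = ∫ w, F w :=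
  volume_preserving_snoc.integral_comp measurableEmbedding_snoc F

lemma cyc_zero (ℓ : ℕ) (x z : ℝ) (w : Fin (ℓ - 1) → ℝ) : cyc ℓ x z w 0 = x := by
  simp [cyc]

lemma cyc_succ (n : ℕ) (x z : ℝ) (w : Fin n → ℝ) (k : Fin n) :
    cyc (n + 1) x z w (k + 1) = w k := by
  simp [cyc, k.2]

lemma cyc_self (n : ℕ) (x z : ℝ) (w : Fin n → ℝ) : cyc (n + 1) x z w (n + 1) = z := by
  simp [cyc]

lemma cyc_snoc (n : ℕ) (x z u : ℝ) (w : Fin n → ℝ) {k : ℕ} (hk : k ≤ n + 1) :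
    cyc (n + 2) x z (Fin.snoc w u) k = cyc (n + 1) x u w k := by
  unfold cyc
  split_ifs with h0 h1 h2
  · rfl
  · simp [Fin.snoc, show k - 1 < n by omega]
  · simp [Fin.snoc, show ¬k - 1 < n by omega]
  all_goals omega

lemma continuous_cyc (ℓ : ℕ) (x : ℝ) (k : ℕ) :
    Continuous fun p : ℝ × (Fin (ℓ - 1) → ℝ) => cyc ℓ x p.1 p.2 k := by
  unfold cyc
  split_ifs <;> fun_prop

lemma prod_cyc {M : Type*} [CommMonoid M] (n : ℕ) (x z : ℝ) (w : Fin n → ℝ)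
    (f : Fin (n + 1) → ℝ → M) :
    ∏ s : Fin (n + 1), f s (cyc (n + 1) x z w s) = f 0 x * ∏ t : Fin n, f t.succ (w t) := by
  simp [Fin.prod_univ_succ, cyc_zero, cyc_succ]

/-- The conditional density of `X (k + 1)` at `y'` given `X k = y`, for a Gaussian pair with
means `m k, m (k + 1)`, variances `S k, S (k + 1)` and regression coefficient `b k`. -/
def gaussTransition (m b S : ℕ → ℝ) (k : ℕ) (y y' : ℝ) : ℝ :=
  gauss1 (m (k + 1) + b k * (y - m k)) (S (k + 1) - b k ^ 2 * S k) y'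

def gaussChainDensity (m b S : ℕ → ℝ) (n : ℕ) (x z : ℝ) (w : Fin n → ℝ) : ℝ :=
  ∏ s : Fin (n + 1), gaussTransition m b S s (cyc (n + 1) x z w s) (cyc (n + 1) x z w (s + 1))

lemma continuous_gaussChainDensity (m b S : ℕ → ℝ) (n : ℕ) (x : ℝ) :
    Continuous fun p : ℝ × (Fin n → ℝ) => gaussChainDensity m b S n x p.1 p.2 := by
  unfold gaussChainDensity gaussTransition gauss1
  have := continuous_cyc (n + 1) x
  fun_prop

lemma gaussChainDensity_nonneg (m b S : ℕ → ℝ) (n : ℕ) (x z : ℝ) (w : Fin n → ℝ) :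
    0 ≤ gaussChainDensity m b S n x z w :=
  Finset.prod_nonneg fun _ _ => gauss1_nonneg _ _ _

lemma gaussChainDensity_snoc (m b S : ℕ → ℝ) (n : ℕ) (x z u : ℝ) (w : Fin n → ℝ) :
    gaussChainDensity m b S (n + 1) x z (Fin.snoc w u) =
      gaussChainDensity m b S n x u w * gaussTransition m b S (n + 1) u z := by
  unfold gaussChainDensity
  rw [Fin.prod_univ_castSucc]
  congr 1
  · refine Finset.prod_congr rfl fun s _ => ?_
    rw [Fin.val_castSucc, cyc_snoc n x z u w (by omega), cyc_snoc n x z u w (by omega)]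
  · rw [Fin.val_last, cyc_snoc n x z u w le_rfl, cyc_self, cyc_self]

lemma chain_variance_pos {b S : ℕ → ℝ} (hS : ∀ k, 0 < S (k + 1) - b k ^ 2 * S k) (n : ℕ) :
    0 < S (n + 1) - (∏ i ∈ range (n + 1), b i) ^ 2 * S 0 := by
  induction n with
  | zero => simpa using hS 0
  | succ n ih =>
    rw [prod_range_succ]
    nlinarith [hS (n + 1), mul_nonneg (sq_nonneg (b (n + 1))) ih.le]

lemma integrable_gaussChainDensity_and_integral {m b S : ℕ → ℝ}
    (hS : ∀ k, 0 < S (k + 1) - b k ^ 2 * S k) (x : ℝ) (n : ℕ) (z : ℝ) :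
    Integrable (gaussChainDensity m b S n x z) ∧
      ∫ w, gaussChainDensity m b S n x z w =
        gauss1 (m (n + 1) + (∏ i ∈ range (n + 1), b i) * (x - m 0))
          (S (n + 1) - (∏ i ∈ range (n + 1), b i) ^ 2 * S 0) z := by
  induction n generalizing z with
  | zero =>
    have hconst : gaussChainDensity m b S 0 x z = fun _ => gaussTransition m b S 0 x z := by
      ext w
      simp [gaussChainDensity, cyc]
    rw [hconst]
    refine ⟨integrable_const _, ?_⟩
    simp [gaussTransition, measureReal_def, volume_pi]
  | succ n ih =>
    have hprod : Integrable fun p : ℝ × (Fin n → ℝ) =>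
        gaussChainDensity m b S n x p.1 p.2 * gaussTransition m b S (n + 1) p.1 z := by
      refine (integrable_prod_iff ?_).mpr
        ⟨.of_forall fun u => (ih u).1.mul_const (gaussTransition m b S (n + 1) u z), ?_⟩
      · exact ((continuous_gaussChainDensity m b S n x).mul
          (by unfold gaussTransition gauss1; fun_prop)).aestronglyMeasurable
      · have hnorm : ∀ u w,
            ‖gaussChainDensity m b S n x u w * gaussTransition m b S (n + 1) u z‖ =
              gaussChainDensity m b S n x u w * gaussTransition m b S (n + 1) u z := fun u w =>
          Real.norm_of_nonneg (mul_nonneg (gaussChainDensity_nonneg ..) (gauss1_nonneg ..))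
        simp_rw [hnorm, integral_mul_const, (ih _).2]
        exact integrable_gauss1_mul_gauss1 (chain_variance_pos hS n) (hS (n + 1)) _ _ _ _ _
    simp_rw [← gaussChainDensity_snoc] at hprod
    refine ⟨integrable_comp_snoc_iff.mp hprod, ?_⟩
    rw [← integral_comp_snoc, Measure.volume_eq_prod, integral_prod _ hprod]
    simp_rw [gaussChainDensity_snoc, integral_mul_const, (ih _).2]
    unfold gaussTransition
    rw [integral_gauss1_mul_gauss1 (chain_variance_pos hS n) (hS (n + 1)),
      prod_range_succ b (n + 1)]
    congr 1 <;> ring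

section Cycle

open Fin.NatCast

variable {n : ℕ} {μ sv cv : Fin (n + 1) → ℝ}

lemma cycle_next_eq_natCast (s : Fin (n + 1)) :
    (⟨(s.1 + 1) % (n + 1), Nat.mod_lt _ n.succ_pos⟩ : Fin (n + 1)) =
      ((s.1 + 1 : ℕ) : Fin (n + 1)) :=
  Fin.ext (Fin.val_natCast _ _).symm

lemma cycle_transition_variance_pos (hsv : ∀ s, 0 < sv s)
    (hpd : ∀ s : Fin (n + 1), cv s ^ 2 < sv s * sv ⟨(s.1 + 1) % (n + 1), Nat.mod_lt _ n.succ_pos⟩)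
    (k : ℕ) : 0 < sv ((k + 1 : ℕ) : Fin (n + 1)) - (cv k / sv k) ^ 2 * sv k := by
  have h := hpd k
  rw [cycle_next_eq_natCast, show ((k : Fin (n + 1)).1 + 1 : ℕ) = k % (n + 1) + 1 from rfl,
    show ((k % (n + 1) + 1 : ℕ) : Fin (n + 1)) = ((k + 1 : ℕ) : Fin (n + 1)) from
      Fin.ext (by simp only [Fin.val_natCast, Nat.mod_add_mod])] at h
  have := hsv k
  rw [div_pow, sub_pos, div_mul_eq_mul_div, div_lt_iff₀ (by positivity)]
  nlinarith

lemma gauss2_cycle_eq_gauss1_mul_gaussTransition (hsv : ∀ s, 0 < sv s)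
    (hpd : ∀ s : Fin (n + 1), cv s ^ 2 < sv s * sv ⟨(s.1 + 1) % (n + 1), Nat.mod_lt _ n.succ_pos⟩)
    (s : Fin (n + 1)) (y y' : ℝ) :
    gauss2 (μ s) (μ ⟨(s.1 + 1) % (n + 1), Nat.mod_lt _ n.succ_pos⟩)
        (sv s) (sv ⟨(s.1 + 1) % (n + 1), Nat.mod_lt _ n.succ_pos⟩) (cv s) y y' =
      gauss1 (μ s) (sv s) y *
        gaussTransition (fun k => μ k) (fun k => cv k / sv k) (fun k => sv k) s y y' := by
  rw [gauss2_eq_gauss1_mul_gauss1 (hsv s) (hpd s), cycle_next_eq_natCast]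
  simp only [gaussTransition, Fin.cast_val_eq_self]
  congr 2
  field_simp

end Cycle

open Fin.NatCast in
lemma integral_cycle_beliefs_div_eq_gauss2 (ℓ : ℕ) (hℓ : 1 ≤ ℓ) (μ sv cv : Fin ℓ → ℝ)
    (hsv : ∀ s, 0 < sv s)
    (hpd : ∀ s : Fin ℓ, (cv s)^2 < sv s * sv ⟨(s.1 + 1) % ℓ, Nat.mod_lt _ hℓ⟩)
    (x z : ℝ) :
    (∫ w : Fin (ℓ - 1) → ℝ,
        (∏ s : Fin ℓ,
          gauss2 (μ s) (μ ⟨(s.1 + 1) % ℓ, Nat.mod_lt _ hℓ⟩)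
            (sv s) (sv ⟨(s.1 + 1) % ℓ, Nat.mod_lt _ hℓ⟩) (cv s)
            (cyc ℓ x z w s.1) (cyc ℓ x z w (s.1 + 1)))
        / ∏ tt : Fin (ℓ - 1),
            gauss1 (μ ⟨tt.1 + 1, Nat.add_lt_of_lt_sub tt.2⟩)
              (sv ⟨tt.1 + 1, Nat.add_lt_of_lt_sub tt.2⟩) (w tt)) =
      gauss2 (μ ⟨0, hℓ⟩) (μ ⟨0, hℓ⟩) (sv ⟨0, hℓ⟩) (sv ⟨0, hℓ⟩)
        ((∏ s, cv s) / (∏ s, sv s) * sv ⟨0, hℓ⟩) x z := by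
  obtain ⟨n, rfl⟩ : ∃ n, ℓ = n + 1 := ⟨ℓ - 1, by omega⟩
  -- The cast `ℕ → Fin (n + 1)` reads indices modulo `n + 1`, so the chain closes up:
  -- `M (n + 1) = M 0` and `S (n + 1) = S 0`.
  set M : ℕ → ℝ := fun k => μ k
  set S : ℕ → ℝ := fun k => sv k
  set b : ℕ → ℝ := fun k => cv k / sv k
  have hS : ∀ k, 0 < S (k + 1) - b k ^ 2 * S k := cycle_transition_variance_pos hsv hpd
  have hD : ∀ w : Fin n → ℝ, ∏ t : Fin n, gauss1 (μ t.succ) (sv t.succ) (w t) ≠ 0 :=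
    fun w => (prod_pos fun t _ => gauss1_pos (hsv _) _ _).ne'
  have hpoint : ∀ w : Fin n → ℝ,
      (∏ s : Fin (n + 1),
          gauss2 (μ s) (μ ⟨(s.1 + 1) % (n + 1), Nat.mod_lt _ n.succ_pos⟩)
            (sv s) (sv ⟨(s.1 + 1) % (n + 1), Nat.mod_lt _ n.succ_pos⟩) (cv s)
            (cyc (n + 1) x z w s.1) (cyc (n + 1) x z w (s.1 + 1)))
        / ∏ t : Fin n, gauss1 (μ t.succ) (sv t.succ) (w t) =
      gauss1 (μ 0) (sv 0) x * gaussChainDensity M b S n x z w := by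
    intro w
    rw [prod_congr rfl fun s _ =>
        gauss2_cycle_eq_gauss1_mul_gaussTransition hsv hpd s _ _, prod_mul_distrib,
      prod_cyc n x z w fun s => gauss1 (μ s) (sv s), mul_div_right_comm,
      mul_div_cancel_right₀ _ (hD w)]
    rfl
  refine (integral_congr_ae (.of_forall hpoint)).trans ?_
  rw [integral_const_mul, (integrable_gaussChainDensity_and_integral hS x n z).2]
  have hprod : ∏ i ∈ range (n + 1), b i = (∏ s, cv s) / ∏ s, sv s := by
    rw [← Fin.prod_univ_eq_prod_range, ← prod_div_distrib]
    simp only [b, Fin.cast_val_eq_self]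
  have hvar := chain_variance_pos hS n
  simp only [hprod, M, S, Nat.cast_zero, Fin.natCast_self, Fin.zero_eta] at hvar ⊢
  set c := (∏ s, cv s) / ∏ s, sv s
  have hs0 := hsv 0
  rw [gauss2_eq_gauss1_mul_gauss1 hs0 (by nlinarith)]
  congr 2 <;> field_simp

/-- **simple-loop weight in the Gaussian case.** For a single cycle of
Gaussian pseudo-marginals `b_{a_s} = gauss2` on `(X_{i_s}, X_{i_{s+1}})` with consistent
univariate marginals `b_{i_s} = gauss1 (μ s) (sv s)` and covariances `cv s`, with
`c = ∏_s cv s / ∏_s sv s`, `|c| < 1`, the loop weight is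
`∫ (b_{i_1,E'}(v,v) − b_{i_1}(v)²)/b_{i_1}(v) dv = c/(1−c)`, where
`b_{i_1,E'}(x,x') = ∫ ∏_s b_{a_s}/∏_{s=2}^ℓ b_{i_s} dx_2⋯dx_ℓ`. -/
theorem gaussian_simple_loop_weight
    (ℓ : ℕ) (hℓ : 1 ≤ ℓ)
    (μ sv cv : Fin ℓ → ℝ)
    (hsv : ∀ s, 0 < sv s)
    (hpd : ∀ s : Fin ℓ, (cv s)^2 < sv s * sv ⟨(s.1 + 1) % ℓ, Nat.mod_lt _ (by omega)⟩)
    (c : ℝ) (hc : c = (∏ s, cv s) / ∏ s, sv s) (hc1 : |c| < 1) :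
    (∫ v : ℝ,
      ((∫ w : Fin (ℓ - 1) → ℝ,
          (∏ s : Fin ℓ,
            gauss2 (μ s) (μ ⟨(s.1 + 1) % ℓ, Nat.mod_lt _ (by omega)⟩)
              (sv s) (sv ⟨(s.1 + 1) % ℓ, Nat.mod_lt _ (by omega)⟩) (cv s)
              (cyc ℓ v v w s.1) (cyc ℓ v v w (s.1 + 1)))
          / ∏ tt : Fin (ℓ - 1),
              gauss1 (μ ⟨tt.1 + 1, by have := tt.2; omega⟩)
                (sv ⟨tt.1 + 1, by have := tt.2; omega⟩) (w tt))
        - (gauss1 (μ ⟨0, by omega⟩) (sv ⟨0, by omega⟩) v)^2)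
      / gauss1 (μ ⟨0, by omega⟩) (sv ⟨0, by omega⟩) v)
    = c / (1 - c) := by
  simp_rw [integral_cycle_beliefs_div_eq_gauss2 ℓ hℓ μ sv cv hsv hpd, ← hc]
  exact integral_gauss2_diag_sub_sq_div_gauss1 (hsv _) hc1 _
end
end

section
/- (Correlation decomposition along a tree via Markov chains) Let X_0, X_1, ..., X_m be real- or finite-valued random variables forming a Markov chain (i.e., X_0 → X_1 → ⋯ → X_m, with X_{s} conditionally independent of X_0,...,X_{s-2} given X_{s-1}), and let t^s : range(X_s) → R^{d_s} be statistics with invertible variance matrices Var[t^s(X_s)]. Then Cor[t^0(X_0), t^m(X_m)] = Cor[t^0(X_0), t^1(X_1)] · Cor[t^1(X_1), t^2(X_2)] ⋯ Cor[t^{m-1}(X_{m-1}), t^m(X_m)], provided each conditional expectation E[t^s(X_s) | X_{s-1}] is an affine function of t^{s-1}(X_{s-1}) — in particular this holds when each X_s takes values in a finite set and t^s spans all functions modulo constants. -/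
open Finset Matrix

noncomputable section

section MarkovChain

variable (m : ℕ) (O : Fin (m + 1) → Type) [∀ s, Fintype (O s)]
  (d : Fin (m + 1) → ℕ) (t : (s : Fin (m + 1)) → O s → Fin (d s) → ℝ)
  (p : ((s : Fin (m + 1)) → O s) → ℝ)

/-- The mean `E[t^s(X_s)]` under the joint distribution `p`. -/
def mcMean (s : Fin (m + 1)) (k : Fin (d s)) : ℝ :=
  ∑ x : (s : Fin (m + 1)) → O s, p x * t s (x s) k

/-- The covariance matrix `Cov[t^s(X_s), t^{s'}(X_{s'})]` under `p`. -/
def mcCov (s s' : Fin (m + 1)) : Matrix (Fin (d s)) (Fin (d s')) ℝ :=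
  Matrix.of fun k l =>
    ∑ x : (s : Fin (m + 1)) → O s,
      p x * (t s (x s) k - mcMean m O d t p s k) * (t s' (x s') l - mcMean m O d t p s' l)

open Classical in
/-- The positive-semidefinite square root of the inverse of a matrix,
i.e. `M^{-1/2}` for a positive-definite `M` (junk value otherwise). -/
def invSqrt {n : ℕ} (M : Matrix (Fin n) (Fin n) ℝ) : Matrix (Fin n) (Fin n) ℝ :=
  if h : (M⁻¹).PosSemidef then
    h.1.eigenvectorUnitary.1 * diagonal ((↑) ∘ (√·) ∘ h.1.eigenvalues) *
      (star h.1.eigenvectorUnitary : Matrix (Fin n) (Fin n) ℝ)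
  else 0

/-- The correlation matrix
`Cor[t^s(X_s), t^{s'}(X_{s'})] = Var[t^s]^{-1/2} Cov[t^s, t^{s'}] Var[t^{s'}]^{-1/2}`. -/
def mcCor (s s' : Fin (m + 1)) : Matrix (Fin (d s)) (Fin (d s')) ℝ :=
  invSqrt (mcCov m O d t p s s) * mcCov m O d t p s s' * invSqrt (mcCov m O d t p s' s')

/-- The ordered product `Cor[t^0,t^1] · Cor[t^1,t^2] ⋯ Cor[t^{s-1},t^s]`. -/
def corChain (s : Fin (m + 1)) : Matrix (Fin (d 0)) (Fin (d s)) ℝ :=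
  Fin.induction (motive := fun s => Matrix (Fin (d 0)) (Fin (d s)) ℝ) 1
    (fun i ih => ih * mcCor m O d t p i.castSucc i.succ) s

/-!
Write `p x = π₀(x₀) ∏_{r<m} K_r(x_r, x_{r+1})` and let `P_i` be the same product truncated to
the kernels that end at or before coordinate `i`, so `P_last = p`. Summing over the whole product
space, the factor `K_r(x_r, x_{r+1})` can be summed out of `P_{r+1}·U` whenever `U` ignores
`x_{r+1}`; since `x_{r+1}` is then a dummy coordinate, this costs exactly a factor
`|O_{r+1}|`. Hence identities between sums against `P_i` propagate to `p`, which gives that `p`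
has mass one and the Markov property `E[W f(X_{s+1})] = E[W (K_s f)(X_s)]` for every `W` depending
on `X_0, …, X_s` only.

With `E[t^{s+1}(X_{s+1}) | X_s] = A t^s(X_s) + c`, the Markov property gives
`Cov[t^r, t^{s+1}] = Cov[t^r, t^s] Aᵀ` for all `r ≤ s`. Taking `r = 0` and `r = s`,
`Cov[t^0, t^{s+1}] = Cov[t^0, t^s] Var[t^s]⁻¹ Cov[t^s, t^{s+1}]`, and because
`Var[t^s]^{-1/2} Var[t^s]^{-1/2} = Var[t^s]⁻¹` this is the identity
`Cor[t^0, t^{s+1}] = Cor[t^0, t^s] Cor[t^s, t^{s+1}]`; induct on `s`.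
-/

theorem card_smul_sum_apply {ι : Type*} [Fintype ι] [DecidableEq ι] {α : ι → Type*}
    [∀ i, Fintype (α i)] {M : Type*} [AddCommMonoid M] (j : ι) {G : (Π i, α i) → α j → M}
    (hG : DependsOn G {j}ᶜ) :
    Fintype.card (α j) • ∑ x, G x (x j) = ∑ x, ∑ y, G x y := by
  have hinv :
      Function.Involutive fun z : (Π i, α i) × α j ↦ (Function.update z.1 j z.2, z.1 j) :=
    fun z ↦ by simp
  calc Fintype.card (α j) • ∑ x, G x (x j) = ∑ x, ∑ _y : α j, G x (x j) := by
        simp only [Finset.sum_const, Finset.card_univ, Finset.smul_sum]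
    _ = ∑ x, ∑ y, G (Function.update x j y) y := by
        simp only [← Fintype.sum_prod_type']
        exact (Equiv.sum_comp (hinv.toPerm _) (fun z ↦ G z.1 (z.1 j))).symm.trans (by simp)
    _ = ∑ x, ∑ y, G x y := by
        refine Fintype.sum_congr _ _ fun x ↦ Fintype.sum_congr _ _ fun y ↦ ?_
        rw [hG fun i (hi : i ≠ j) ↦ Function.update_of_ne hi y x]

section PrefixWeight

variable {n : ℕ} {α : Fin (n + 1) → Type*} (pi0 : α 0 → ℝ)
  (K : (r : Fin n) → α r.castSucc → α r.succ → ℝ)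

def prefixWeight (i : Fin (n + 1)) (x : Π s, α s) : ℝ :=
  pi0 (x 0) * ∏ r with r.castSucc < i, K r (x r.castSucc) (x r.succ)

theorem prefixWeight_zero (x : Π s, α s) : prefixWeight pi0 K 0 x = pi0 (x 0) := by
  simp [prefixWeight]

theorem prefixWeight_succ (r : Fin n) (x : Π s, α s) :
    prefixWeight pi0 K r.succ x =
      prefixWeight pi0 K r.castSucc x * K r (x r.castSucc) (x r.succ) := by
  have : univ.filter (fun r' : Fin n ↦ r'.castSucc < r.succ) =
      insert r (univ.filter fun r' ↦ r'.castSucc < r.castSucc) := by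
    ext r'
    simp [Fin.castSucc_lt_succ_iff, le_iff_lt_or_eq, or_comm]
  rw [prefixWeight, prefixWeight, this, prod_insert (by simp)]
  ring

theorem prefixWeight_last (x : Π s, α s) :
    prefixWeight pi0 K (Fin.last n) x = pi0 (x 0) * ∏ r, K r (x r.castSucc) (x r.succ) := by
  simp [prefixWeight, Fin.castSucc_lt_last]

theorem dependsOn_prefixWeight (i : Fin (n + 1)) :
    DependsOn (prefixWeight pi0 K i) (Set.Iic i) := by
  intro x y h
  simp only [prefixWeight, h 0 (Fin.zero_le i)]
  congr 1
  refine prod_congr rfl fun r hr ↦ ?_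
  have hr : r.castSucc < i := (mem_filter.mp hr).2
  rw [h _ hr.le, h _ (Fin.castSucc_lt_iff_succ_le.mp hr)]

end PrefixWeight

section ChainSums

variable {n : ℕ} {α : Fin (n + 1) → Type*} [∀ s, Fintype (α s)] {pi0 : α 0 → ℝ}
  {K : (r : Fin n) → α r.castSucc → α r.succ → ℝ}

theorem nonempty_of_sum_eq_one (hpi1 : ∑ a, pi0 a = 1) (hK1 : ∀ r x, ∑ y, K r x y = 1)
    (s : Fin (n + 1)) : Nonempty (α s) := by
  induction s using Fin.induction with
  | zero => exact univ_nonempty_iff.mp (nonempty_of_sum_ne_zero (hpi1 ▸ one_ne_zero))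
  | succ r ih =>
    obtain ⟨x⟩ := ih
    exact univ_nonempty_iff.mp (nonempty_of_sum_ne_zero ((hK1 r x).symm ▸ one_ne_zero))

theorem card_mul_sum_prefixWeight_succ (r : Fin n) {U : (Π s, α s) → α r.succ → ℝ}
    (hU : DependsOn U (Set.Iic r.castSucc)) :
    Fintype.card (α r.succ) * ∑ x, prefixWeight pi0 K r.succ x * U x (x r.succ) =
      ∑ x, prefixWeight pi0 K r.castSucc x * ∑ y, K r (x r.castSucc) y * U x y := by
  have hpast : Set.Iic r.castSucc ⊆ {r.succ}ᶜ := fun j hj ↦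
    (Set.mem_Iic.mp hj).trans_lt Fin.castSucc_lt_succ |>.ne
  have hG : DependsOn
      (fun x y ↦ prefixWeight pi0 K r.castSucc x * (K r (x r.castSucc) y * U x y)) {r.succ}ᶜ :=
    fun x y h ↦ by
    dsimp only
    rw [dependsOn_prefixWeight pi0 K _ fun j hj ↦ h j (hpast hj), hU fun j hj ↦ h j (hpast hj),
      h _ (hpast Set.self_mem_Iic)]
  simpa only [nsmul_eq_mul, ← mul_sum, prefixWeight_succ, mul_assoc]
    using card_smul_sum_apply r.succ hG

theorem card_mul_sum_prefixWeight_succ_of_stochastic (hK1 : ∀ r x, ∑ y, K r x y = 1)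
    (r : Fin n) {U : (Π s, α s) → ℝ} (hU : DependsOn U (Set.Iic r.castSucc)) :
    Fintype.card (α r.succ) * ∑ x, prefixWeight pi0 K r.succ x * U x =
      ∑ x, prefixWeight pi0 K r.castSucc x * U x := by
  simpa only [← sum_mul, hK1, one_mul] using
    card_mul_sum_prefixWeight_succ (pi0 := pi0) (K := K) r (U := fun x _ ↦ U x) fun x y h ↦ by
      dsimp only
      rw [hU h]

theorem sum_prefixWeight_mul_congr [∀ s, Nonempty (α s)] (hK1 : ∀ r x, ∑ y, K r x y = 1)
    {i j : Fin (n + 1)} (hij : i ≤ j) {U V : (Π s, α s) → ℝ} (hU : DependsOn U (Set.Iic i))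
    (hV : DependsOn V (Set.Iic i))
    (h : ∑ x, prefixWeight pi0 K i x * U x = ∑ x, prefixWeight pi0 K i x * V x) :
    ∑ x, prefixWeight pi0 K j x * U x = ∑ x, prefixWeight pi0 K j x * V x := by
  induction j using Fin.induction with
  | zero => rwa [Fin.le_zero_iff.mp hij] at h
  | succ r ih =>
    rcases hij.eq_or_lt with rfl | hlt
    · exact h
    have hir : Set.Iic i ⊆ Set.Iic r.castSucc :=
      Set.Iic_subset_Iic.mpr (Fin.le_castSucc_iff.mpr hlt)
    refine mul_left_cancel₀ (Nat.cast_ne_zero.mpr (Fintype.card_ne_zero (α := α r.succ))) ?_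
    rw [card_mul_sum_prefixWeight_succ_of_stochastic hK1 r (hU.mono hir),
      card_mul_sum_prefixWeight_succ_of_stochastic hK1 r (hV.mono hir),
      ih (Fin.le_castSucc_iff.mpr hlt)]

theorem prod_card_mul_sum_prefixWeight (hpi1 : ∑ a, pi0 a = 1) (hK1 : ∀ r x, ∑ y, K r x y = 1)
    (i : Fin (n + 1)) :
    (∏ j ≤ i, (Fintype.card (α j) : ℝ)) * ∑ x, prefixWeight pi0 K i x =
      Fintype.card (Π s, α s) := by
  induction i using Fin.induction with
  | zero =>
    have := card_smul_sum_apply 0 (G := fun (_ : Π s, α s) a ↦ pi0 a)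
      ((dependsOn_const pi0).mono (Set.empty_subset _))
    have hIic : Finset.Iic (0 : Fin (n + 1)) = {0} := by
      ext j
      simp
    simpa [prefixWeight_zero, hpi1, hIic] using this
  | succ r ih =>
    have hIic : Finset.Iic r.succ = insert r.succ (Finset.Iic r.castSucc) := by
      ext j
      rw [mem_insert, mem_Iic, mem_Iic, le_iff_lt_or_eq, ← Fin.le_castSucc_iff, or_comm]
    have hstep := card_mul_sum_prefixWeight_succ_of_stochastic hK1 r (pi0 := pi0)
      (U := fun _ ↦ 1) ((dependsOn_const 1).mono (Set.empty_subset _))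
    simp only [mul_one] at hstep
    rw [hIic, prod_insert (by simp), mul_comm (Fintype.card _ : ℝ), mul_assoc, hstep, ih]

theorem sum_eq_one_of_eq_prod_kernel (hpi1 : ∑ a, pi0 a = 1) (hK1 : ∀ r x, ∑ y, K r x y = 1)
    {w : (Π s, α s) → ℝ}
    (hw : ∀ x, w x = pi0 (x 0) * ∏ r, K r (x r.castSucc) (x r.succ)) :
    ∑ x, w x = 1 := by
  have := nonempty_of_sum_eq_one hpi1 hK1
  have hcard := prod_card_mul_sum_prefixWeight hpi1 hK1 (Fin.last n)
  rw [Fintype.card_pi, Nat.cast_prod,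
    show Finset.Iic (Fin.last n) = univ from Fin.top_eq_last n ▸ Finset.Iic_top] at hcard
  simp only [hw, ← prefixWeight_last]
  exact mul_left_cancel₀
    (prod_ne_zero_iff.mpr fun j _ ↦ Nat.cast_ne_zero.mpr Fintype.card_ne_zero)
    (hcard.trans (mul_one _).symm)

theorem sum_mul_mul_apply_succ_of_eq_prod_kernel [∀ s, Nonempty (α s)]
    (hK1 : ∀ r x, ∑ y, K r x y = 1) {w : (Π s, α s) → ℝ}
    (hw : ∀ x, w x = pi0 (x 0) * ∏ r, K r (x r.castSucc) (x r.succ)) (r : Fin n)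
    {W : (Π s, α s) → ℝ} (hW : DependsOn W (Set.Iic r.castSucc)) (f : α r.succ → ℝ) :
    ∑ x, w x * (W x * f (x r.succ)) = ∑ x, w x * (W x * ∑ y, K r (x r.castSucc) y * f y) := by
  have hpast : Set.Iic r.castSucc ⊆ Set.Iic r.succ :=
    Set.Iic_subset_Iic.mpr (Fin.castSucc_le_succ r)
  simp only [hw, ← prefixWeight_last]
  refine sum_prefixWeight_mul_congr hK1 (Fin.le_last r.succ)
    (fun x y h ↦ by rw [hW fun j hj ↦ h j (hpast hj), h _ Set.self_mem_Iic])
    (fun x y h ↦ by rw [hW fun j hj ↦ h j (hpast hj), h _ (hpast Set.self_mem_Iic)]) ?_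
  refine mul_left_cancel₀ (Nat.cast_ne_zero.mpr (Fintype.card_ne_zero (α := α r.succ))) ?_
  rw [card_mul_sum_prefixWeight_succ r (U := fun x a ↦ W x * f a) fun x y h ↦ by
      dsimp only; rw [hW h],
    card_mul_sum_prefixWeight_succ_of_stochastic hK1 r fun x y h ↦ by
      rw [hW h, h _ Set.self_mem_Iic]]
  simp only [mul_sum, mul_left_comm _ (W _)]

end ChainSums

section Covariance

variable {m O d t p}

theorem sum_mul_sub_mcMean (hmass : ∑ x, p x = 1) (s : Fin (m + 1)) (k : Fin (d s)) :
    ∑ x, p x * (t s (x s) k - mcMean m O d t p s k) = 0 := by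
  simp only [mul_sub, sum_sub_distrib, ← sum_mul, hmass, one_mul, mcMean, sub_self]

theorem mcCov_apply (hmass : ∑ x, p x = 1) (s s' : Fin (m + 1)) (k : Fin (d s))
    (l : Fin (d s')) :
    mcCov m O d t p s s' k l =
      ∑ x, p x * ((t s (x s) k - mcMean m O d t p s k) * t s' (x s') l) := by
  rw [mcCov, of_apply, ← sub_zero (∑ x, p x * (_ * _)),
    ← mul_zero (mcMean m O d t p s' l), ← sum_mul_sub_mcMean hmass s k, mul_sum,
    ← sum_sub_distrib]
  exact sum_congr rfl fun x _ ↦ by ring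

theorem mcCov_succ_eq_mul_transpose (hmass : ∑ x, p x = 1) (s : Fin m)
    (A : Matrix (Fin (d s.succ)) (Fin (d s.castSucc)) ℝ) (c : Fin (d s.succ) → ℝ)
    (hcond : ∀ W : ((r : Fin (m + 1)) → O r) → ℝ, DependsOn W (Set.Iic s.castSucc) →
      ∀ l, ∑ x, p x * (W x * t s.succ (x s.succ) l) =
        ∑ x, p x * (W x * ((∑ l', A l l' * t s.castSucc (x s.castSucc) l') + c l)))
    {r : Fin (m + 1)} (hr : r ≤ s.castSucc) :
    mcCov m O d t p r s.succ = mcCov m O d t p r s.castSucc * Aᵀ := by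
  ext k l
  have hW : DependsOn (fun x ↦ t r (x r) k - mcMean m O d t p r k) (Set.Iic s.castSucc) :=
    fun x y h ↦ by dsimp only; rw [h r hr]
  have hconst : ∑ x, c l * (p x * (t r (x r) k - mcMean m O d t p r k)) = 0 := by
    rw [← mul_sum, sum_mul_sub_mcMean hmass, mul_zero]
  rw [mcCov_apply hmass, hcond _ hW, mul_apply]
  simp only [mcCov_apply hmass, transpose_apply, sum_mul]
  rw [sum_comm, ← add_zero (∑ x, ∑ l', _), ← hconst, ← sum_add_distrib]
  refine sum_congr rfl fun x _ ↦ ?_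
  rw [mul_add, mul_add, mul_sum, mul_sum]
  congr 1
  · exact sum_congr rfl fun _ _ ↦ by ring
  · ring

end Covariance

theorem invSqrt_mul_self {n : ℕ} {M : Matrix (Fin n) (Fin n) ℝ} (hM : (M⁻¹).PosSemidef) :
    invSqrt M * invSqrt M = M⁻¹ := by
  have hU : (star hM.1.eigenvectorUnitary : Matrix (Fin n) (Fin n) ℝ) *
      hM.1.eigenvectorUnitary.1 = 1 := by
    simp
  have hD : diagonal (((↑) ∘ (√·) ∘ hM.1.eigenvalues) : Fin n → ℝ) *
      diagonal ((↑) ∘ (√·) ∘ hM.1.eigenvalues) =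
        diagonal (RCLike.ofReal ∘ hM.1.eigenvalues) := by
    rw [diagonal_mul_diagonal]
    congr 1
    funext i
    simp [Real.mul_self_sqrt (hM.eigenvalues_nonneg i)]
  rw [invSqrt, dif_pos hM]
  conv_rhs => rw [hM.1.spectral_theorem, Unitary.conjStarAlgAut_apply]
  simp only [Matrix.mul_assoc]
  rw [← Matrix.mul_assoc (star _ : Matrix (Fin n) (Fin n) ℝ), hU, Matrix.one_mul,
    ← Matrix.mul_assoc (diagonal _) (diagonal _), hD]

theorem invSqrt_mul_mul_invSqrt {n : ℕ} {M : Matrix (Fin n) (Fin n) ℝ} (hM : M.PosDef) :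
    invSqrt M * M * invSqrt M = 1 :=
  mul_eq_one_comm.mp <| by
    rw [← Matrix.mul_assoc, invSqrt_mul_self hM.inv.posSemidef,
      nonsing_inv_mul M ((isUnit_iff_isUnit_det M).mp hM.isUnit)]

section Correlation

variable {m O d t p}

theorem mcCor_self {s : Fin (m + 1)} (hs : (mcCov m O d t p s s).PosDef) :
    mcCor m O d t p s s = 1 :=
  invSqrt_mul_mul_invSqrt hs

theorem mcCor_eq_mcCor_mul_mcCor {s₀ s₁ s₂ : Fin (m + 1)}
    (hs₁ : (mcCov m O d t p s₁ s₁).PosDef) (B : Matrix (Fin (d s₁)) (Fin (d s₂)) ℝ)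
    (h₀ : mcCov m O d t p s₀ s₂ = mcCov m O d t p s₀ s₁ * B)
    (h₁ : mcCov m O d t p s₁ s₂ = mcCov m O d t p s₁ s₁ * B) :
    mcCor m O d t p s₀ s₂ = mcCor m O d t p s₀ s₁ * mcCor m O d t p s₁ s₂ := by
  simp only [mcCor, h₀, h₁, Matrix.mul_assoc]
  rw [← Matrix.mul_assoc (invSqrt _) (invSqrt _), invSqrt_mul_self hs₁.inv.posSemidef,
    ← Matrix.mul_assoc _⁻¹, nonsing_inv_mul _ ((isUnit_iff_isUnit_det _).mp hs₁.isUnit),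
    Matrix.one_mul]

theorem corChain_succ (i : Fin m) :
    corChain m O d t p i.succ =
      corChain m O d t p i.castSucc * mcCor m O d t p i.castSucc i.succ := by
  simp only [corChain, Fin.induction_succ]

end Correlation

theorem markov_correlation_decomposition
    (pi0 : O 0 → ℝ)
    (K : (s : Fin m) → O s.castSucc → O s.succ → ℝ)
    (hpi1 : ∑ x : O 0, pi0 x = 1)
    (hK1 : ∀ s x, ∑ y : O s.succ, K s x y = 1)
    (hp : ∀ x : (s : Fin (m + 1)) → O s,
      p x = pi0 (x 0) * ∏ s : Fin m, K s (x s.castSucc) (x s.succ))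
    (hpd : ∀ s : Fin (m + 1), (mcCov m O d t p s s).PosDef)
    (haffine : ∀ s : Fin m,
      ∃ (A : Matrix (Fin (d s.succ)) (Fin (d s.castSucc)) ℝ) (c : Fin (d s.succ) → ℝ),
        ∀ (x : O s.castSucc) (k : Fin (d s.succ)),
          ∑ y : O s.succ, K s x y * t s.succ y k
            = (∑ l, A k l * t s.castSucc x l) + c k) :
    mcCor m O d t p 0 (Fin.last m) = corChain m O d t p (Fin.last m) := by
  have := nonempty_of_sum_eq_one hpi1 hK1
  have hmass := sum_eq_one_of_eq_prod_kernel hpi1 hK1 hp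
  suffices h : ∀ s, mcCor m O d t p 0 s = corChain m O d t p s from h _
  intro s
  induction s using Fin.induction with
  | zero => exact mcCor_self (hpd 0)
  | succ i ih =>
    obtain ⟨A, c, hA⟩ := haffine i
    have hcov : ∀ r ≤ i.castSucc,
        mcCov m O d t p r i.succ = mcCov m O d t p r i.castSucc * Aᵀ :=
      fun r hr ↦ mcCov_succ_eq_mul_transpose hmass i A c (fun W hW l ↦
        (sum_mul_mul_apply_succ_of_eq_prod_kernel hK1 hp i hW (t i.succ · l)).trans
          (by simp only [hA])) hr
    rw [corChain_succ, ← ih]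
    exact mcCor_eq_mcCor_mul_mcCor (hpd _) Aᵀ (hcov 0 (Fin.zero_le _)) (hcov _ le_rfl)

end MarkovChain
end
end
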